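/- If two graphs on the same n vertices differ by at most C edges, then their symmetric normalized Laplacians satisfy ‖L̂₁ - L̂₂‖_{S¹} ≤ 2C√2·√(n-1). -/

import Mathlib

open Matrix Finset

/-- The symmetric normalized Laplacian `I - D^{-1/2} A D^{-1/2}`. -/
noncomputable def normLap {n : ℕ} (G : SimpleGraph (Fin n)) [DecidableRel G.Adj] :
    Matrix (Fin n) (Fin n) ℝ :=
  1 - Matrix.of fun i j =>
    (G.adjMatrix ℝ) i j / (Real.sqrt (G.degree i) * Real.sqrt (G.degree j))

/-!
Write `M = L̂₁ - L̂₂ = N₂ - N₁` with `Nᵢ = D^{-1/2} A D^{-1/2}` (`normAdj`). By Cauchy–Schwarz over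
the nonzero eigenvalues, `‖M‖_{S¹}² ≤ rank M · ‖M‖_F²`, so it suffices to bound `rank M · ‖M‖_F²`
by `8 k² (n - 1)`, where `k` is the number of edges in which the graphs differ.

Only the rows and columns of the `s ≤ 2k` endpoints of these edges change, so `rank M ≤ 2s`; and
since each row of `Nᵢ` has squared norm at most `1`, `‖M‖_F² ≤ 4s`. This gives `32 k²`, enough for
`k ≥ 2` once `n ≥ 5`, while for `n ≤ 4` the bound `rank M · ‖M‖_F² ≤ n · 4n` suffices. A single
edge `uw` needs a finer count: if `d ≥ 1` is the degree of `u` in the graph without `uw`, then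
`M_{uw}² ≤ 1/4` and `M_{uj}² ≤ 1/d - 1/(d+1)` for the `d` other neighbours `j` of `u`, so row `u`
(and likewise row `w`) has squared norm at most `3/4` and `‖M‖_F² ≤ 3`; moreover `n > d + 1 ≥ 2`.
-/

lemma sq_inv_sqrt_sub_inv_sqrt_le {a b : ℝ} (ha : 0 < a) (hab : a ≤ b) :
    ((√a)⁻¹ - (√b)⁻¹) ^ 2 ≤ a⁻¹ - b⁻¹ := by
  have hba : (√b)⁻¹ ≤ (√a)⁻¹ := inv_anti₀ (by positivity) (Real.sqrt_le_sqrt hab)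
  have hb : 0 ≤ (√b)⁻¹ := by positivity
  have ha2 : ((√a)⁻¹) ^ 2 = a⁻¹ := by rw [inv_pow, Real.sq_sqrt ha.le]
  have hb2 : ((√b)⁻¹) ^ 2 = b⁻¹ := by rw [inv_pow, Real.sq_sqrt (ha.le.trans hab)]
  nlinarith

namespace Matrix

variable {m : Type*} [Fintype m] [DecidableEq m]

theorem IsHermitian.sum_eigenvalues_sq {A : Matrix m m ℝ} (hA : A.IsHermitian) :
    ∑ i, hA.eigenvalues i ^ 2 = ∑ i, ∑ j, A i j ^ 2 := by
  have h : trace (A * A) = ∑ i, hA.eigenvalues i ^ 2 := by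
    conv_lhs => rw [hA.spectral_theorem, ← map_mul, Unitary.conjStarAlgAut_apply, trace_mul_cycle,
      Unitary.coe_star_mul_self, one_mul, diagonal_mul_diagonal, trace_diagonal]
    simp [sq]
  rw [← h]
  simp only [trace, diag_apply, mul_apply]
  refine sum_congr rfl fun i _ => sum_congr rfl fun j _ => ?_
  rw [sq, ← hA.apply j i, star_trivial]

theorem IsHermitian.sq_sum_abs_eigenvalues_le {A : Matrix m m ℝ} (hA : A.IsHermitian) :
    (∑ i, |hA.eigenvalues i|) ^ 2 ≤ A.rank * ∑ i, ∑ j, A i j ^ 2 := by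
  set T : Finset m := {i | hA.eigenvalues i ≠ 0}
  have hT : #T = A.rank := by rw [hA.rank_eq_card_non_zero_eigs, Fintype.card_subtype]
  calc (∑ i, |hA.eigenvalues i|) ^ 2 = (∑ i ∈ T, |hA.eigenvalues i|) ^ 2 := by
        simp only [T, ← abs_ne_zero (a := hA.eigenvalues _), sum_filter_ne_zero]
    _ ≤ (#T : ℝ) * ∑ i ∈ T, |hA.eigenvalues i| ^ 2 :=
        sq_sum_le_card_mul_sum_sq (s := T) (f := fun i => |hA.eigenvalues i|)
    _ ≤ (#T : ℝ) * ∑ i, hA.eigenvalues i ^ 2 := by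
        simp only [sq_abs]
        gcongr
        exact subset_univ T
    _ = A.rank * ∑ i, ∑ j, A i j ^ 2 := by rw [hT, hA.sum_eigenvalues_sq]

theorem rank_add_le {l n R : Type*} [Fintype n] [Field R] (A B : Matrix l n R) :
    (A + B).rank ≤ A.rank + B.rank := by
  rw [rank, rank, rank, mulVecLin_add]
  exact (Submodule.finrank_mono (LinearMap.range_add_le _ _)).trans
    (Submodule.finrank_add_le_finrank_add_finrank _ _)

theorem rank_le_two_mul_card_of_apply_eq_zero {R : Type*} [Field R] (A : Matrix m m R)
    (s : Finset m) (h : ∀ i ∉ s, ∀ j ∉ s, A i j = 0) : A.rank ≤ 2 * #s := by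
  let P : Matrix m m R := of fun i j => if i ∈ s then A i j else 0
  let Q : Matrix m m R := of fun i j => if i ∈ s then 0 else A i j
  have hP : P.rank ≤ #s := P.rank_le_card_of_support_subset s <|
    Function.support_subset_iff'.2 fun i hi => by ext j; simp_all [P]
  have hQ : Qᵀ.rank ≤ #s := Qᵀ.rank_le_card_of_support_subset s <|
    Function.support_subset_iff'.2 fun j hj => by
      ext i; by_cases hi : i ∈ s <;> simp_all [Q]
  have hPQ : A = P + Q := by ext i j; by_cases hi : i ∈ s <;> simp [P, Q, hi]
  rw [rank_transpose] at hQ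
  calc A.rank ≤ P.rank + Q.rank := hPQ ▸ rank_add_le P Q
    _ ≤ 2 * #s := by omega

theorem IsSymm.sum_sq_le_two_mul_of_apply_eq_zero {A : Matrix m m ℝ} (hA : A.IsSymm)
    (s : Finset m) (h : ∀ i ∉ s, ∀ j ∉ s, A i j = 0) :
    ∑ i, ∑ j, A i j ^ 2 ≤ 2 * ∑ i ∈ s, ∑ j, A i j ^ 2 := by
  have hle (i j : m) :
      A i j ^ 2 ≤ (if i ∈ s then A i j ^ 2 else 0) + (if j ∈ s then A j i ^ 2 else 0) := by
    by_cases hi : i ∈ s <;> by_cases hj : j ∈ s <;> simp [hi, hj, h, hA.apply i j, sq_nonneg]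
  calc ∑ i, ∑ j, A i j ^ 2
      ≤ ∑ i, ∑ j, ((if i ∈ s then A i j ^ 2 else 0) + (if j ∈ s then A j i ^ 2 else 0)) := by
        gcongr with i _ j _; exact hle i j
    _ = ∑ i ∈ s, ∑ j, A i j ^ 2 + ∑ j ∈ s, ∑ i, A j i ^ 2 := by
        simp only [sum_add_distrib, sum_ite_irrel, sum_const_zero, sum_ite_mem, univ_inter]
        rw [sum_comm (s := univ)]
    _ = 2 * ∑ i ∈ s, ∑ j, A i j ^ 2 := by ring

end Matrix

namespace SimpleGraph

variable {V : Type*} [Fintype V]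

noncomputable def normAdj (G : SimpleGraph V) [DecidableRel G.Adj] : Matrix V V ℝ :=
  Matrix.of fun i j => G.adjMatrix ℝ i j / (Real.sqrt (G.degree i) * Real.sqrt (G.degree j))

section normAdj

variable (G : SimpleGraph V) [DecidableRel G.Adj]

lemma normAdj_apply (i j : V) :
    G.normAdj i j = if G.Adj i j then (√(G.degree i) * √(G.degree j))⁻¹ else 0 := by
  simp only [normAdj, of_apply, adjMatrix_apply]
  split_ifs <;> simp

lemma normAdj_nonneg (i j : V) : 0 ≤ G.normAdj i j := by
  rw [normAdj_apply]; split_ifs <;> positivity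

lemma isSymm_normAdj : G.normAdj.IsSymm := by
  ext i j
  simp only [transpose_apply, normAdj_apply, G.adj_comm, mul_comm]

lemma sum_ite_adj {R : Type*} [NonAssocSemiring R] (i : V) (c : R) :
    ∑ j, (if G.Adj i j then c else 0) = G.degree i * c := by
  rw [← sum_filter, ← neighborFinset_eq_filter, sum_const, card_neighborFinset_eq_degree,
    nsmul_eq_mul]

lemma normAdj_sq_le (i j : V) :
    G.normAdj i j ^ 2 ≤ if G.Adj i j then (G.degree i : ℝ)⁻¹ else 0 := by
  rw [normAdj_apply]
  split_ifs with h
  · have hi : (0 : ℝ) < G.degree i := by exact_mod_cast (G.degree_pos_iff_exists_adj i).2 ⟨j, h⟩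
    have hj : (1 : ℝ) ≤ G.degree j := by
      exact_mod_cast (G.degree_pos_iff_exists_adj j).2 ⟨i, h.symm⟩
    rw [inv_pow, mul_pow, Real.sq_sqrt hi.le, Real.sq_sqrt (by positivity)]
    gcongr
    exact le_mul_of_one_le_right hi.le hj
  · simp

lemma sum_normAdj_sq_le_one (i : V) : ∑ j, G.normAdj i j ^ 2 ≤ 1 := by
  calc ∑ j, G.normAdj i j ^ 2 ≤ ∑ j, if G.Adj i j then (G.degree i : ℝ)⁻¹ else 0 :=
        sum_le_sum fun j _ => G.normAdj_sq_le i j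
    _ = G.degree i * (G.degree i : ℝ)⁻¹ := G.sum_ite_adj i _
    _ ≤ 1 := mul_inv_le_one

end normAdj

variable (G₁ G₂ : SimpleGraph V) [DecidableRel G₁.Adj] [DecidableRel G₂.Adj]

lemma sum_sq_normAdj_sub_row_le_two (i : V) : ∑ j, (G₁.normAdj - G₂.normAdj) i j ^ 2 ≤ 2 := by
  have hle (j : V) :
      (G₁.normAdj - G₂.normAdj) i j ^ 2 ≤ G₁.normAdj i j ^ 2 + G₂.normAdj i j ^ 2 := by
    rw [Matrix.sub_apply]
    nlinarith [mul_nonneg (G₁.normAdj_nonneg i j) (G₂.normAdj_nonneg i j)]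
  calc ∑ j, (G₁.normAdj - G₂.normAdj) i j ^ 2
      ≤ ∑ j, G₁.normAdj i j ^ 2 + ∑ j, G₂.normAdj i j ^ 2 := by
        rw [← sum_add_distrib]; exact sum_le_sum fun j _ => hle j
    _ ≤ 2 := by linarith [G₁.sum_normAdj_sq_le_one i, G₂.sum_normAdj_sq_le_one i]

lemma degree_eq_of_forall_adj_iff {v : V} (h : ∀ w, G₁.Adj v w ↔ G₂.Adj v w) :
    G₁.degree v = G₂.degree v := by
  simp only [← card_neighborFinset_eq_degree]
  congr 1
  ext w
  simpa using h w

lemma isSymm_normAdj_sub : (G₁.normAdj - G₂.normAdj).IsSymm :=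
  G₁.isSymm_normAdj.sub G₂.isSymm_normAdj

variable [DecidableEq V]

def symmDiffSupport : Finset V := (symmDiff G₁.edgeFinset G₂.edgeFinset).biUnion Sym2.toFinset

lemma card_symmDiffSupport_le :
    #(symmDiffSupport G₁ G₂) ≤ 2 * #(symmDiff G₁.edgeFinset G₂.edgeFinset) := by
  refine card_biUnion_le.trans ?_
  rw [mul_comm, ← smul_eq_mul, ← sum_const]
  refine sum_le_sum fun e _ => ?_
  rw [Sym2.card_toFinset]
  split_ifs <;> omega

lemma adj_iff_of_notMem_symmDiffSupport {v : V} (hv : v ∉ symmDiffSupport G₁ G₂) (w : V) :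
    G₁.Adj v w ↔ G₂.Adj v w := by
  by_contra h
  refine hv (mem_biUnion.2 ⟨s(v, w), ?_, Sym2.mem_toFinset.2 (Sym2.mem_mk_left v w)⟩)
  simp only [mem_symmDiff, mem_edgeFinset, mem_edgeSet]
  tauto

lemma normAdj_apply_eq_of_notMem_symmDiffSupport {i j : V} (hi : i ∉ symmDiffSupport G₁ G₂)
    (hj : j ∉ symmDiffSupport G₁ G₂) : G₁.normAdj i j = G₂.normAdj i j := by
  have hdeg {v : V} (hv : v ∉ symmDiffSupport G₁ G₂) : G₁.degree v = G₂.degree v :=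
    degree_eq_of_forall_adj_iff G₁ G₂ (adj_iff_of_notMem_symmDiffSupport G₁ G₂ hv)
  simp only [normAdj_apply, adj_iff_of_notMem_symmDiffSupport G₁ G₂ hi, hdeg hi, hdeg hj]

lemma normAdj_sub_apply_eq_zero {i j : V} (hi : i ∉ symmDiffSupport G₁ G₂)
    (hj : j ∉ symmDiffSupport G₁ G₂) : (G₁.normAdj - G₂.normAdj) i j = 0 := by
  rw [Matrix.sub_apply, normAdj_apply_eq_of_notMem_symmDiffSupport G₁ G₂ hi hj, sub_self]

lemma rank_normAdj_sub_le : (G₁.normAdj - G₂.normAdj).rank ≤ 2 * #(symmDiffSupport G₁ G₂) :=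
  rank_le_two_mul_card_of_apply_eq_zero _ _ fun _ hi _ hj =>
    normAdj_sub_apply_eq_zero G₁ G₂ hi hj

lemma sum_sq_normAdj_sub_le :
    ∑ i, ∑ j, (G₁.normAdj - G₂.normAdj) i j ^ 2 ≤ 4 * #(symmDiffSupport G₁ G₂) := by
  calc ∑ i, ∑ j, (G₁.normAdj - G₂.normAdj) i j ^ 2
      ≤ 2 * ∑ i ∈ symmDiffSupport G₁ G₂, ∑ j, (G₁.normAdj - G₂.normAdj) i j ^ 2 :=
        (isSymm_normAdj_sub G₁ G₂).sum_sq_le_two_mul_of_apply_eq_zero _ fun _ hi _ hj =>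
          normAdj_sub_apply_eq_zero G₁ G₂ hi hj
    _ ≤ 2 * ∑ _i ∈ symmDiffSupport G₁ G₂, (2 : ℝ) := by
        gcongr with i
        exact sum_sq_normAdj_sub_row_le_two G₁ G₂ i
    _ = 4 * #(symmDiffSupport G₁ G₂) := by rw [sum_const, nsmul_eq_mul]; ring

section SingleEdge

variable {G₁ G₂} {u w : V} (h : symmDiff G₁.edgeFinset G₂.edgeFinset = {s(u, w)})
  (huw : G₁.Adj u w)
include h huw

lemma adj_iff_of_symmDiff_eq_singleton (a b : V) :
    G₂.Adj a b ↔ G₁.Adj a b ∧ s(a, b) ≠ s(u, w) := by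
  have hab := congrArg (s(a, b) ∈ ·) h
  simp only [mem_symmDiff, mem_edgeFinset, mem_edgeSet, mem_singleton, eq_iff_iff] at hab
  by_cases he : s(a, b) = s(u, w)
  · rw [Sym2.eq_iff] at he
    rcases he with ⟨rfl, rfl⟩ | ⟨rfl, rfl⟩ <;> simp_all [G₁.adj_comm]
  · tauto

lemma degree_eq_add_one_of_symmDiff_eq_singleton : G₁.degree u = G₂.degree u + 1 := by
  have hN : G₂.neighborFinset u = (G₁.neighborFinset u).erase w := by
    ext j
    simp only [mem_neighborFinset, mem_erase, adj_iff_of_symmDiff_eq_singleton h huw,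
      ne_eq, Sym2.congr_right]
    tauto
  rw [← card_neighborFinset_eq_degree, ← card_neighborFinset_eq_degree, hN,
    card_erase_add_one ((G₁.mem_neighborFinset u w).2 huw)]

lemma degree_eq_of_symmDiff_eq_singleton {v : V} (hvu : v ≠ u) (hvw : v ≠ w) :
    G₂.degree v = G₁.degree v :=
  degree_eq_of_forall_adj_iff G₂ G₁ fun b => by
    rw [adj_iff_of_symmDiff_eq_singleton h huw, and_iff_left_iff_imp]
    rintro - hvb
    have := Sym2.mem_mk_left v b
    rw [hvb, Sym2.mem_iff] at this
    tauto

lemma sq_normAdj_sub_apply_edge_le_of_symmDiff_eq_singleton (hdeg : ∀ v, 0 < G₂.degree v) :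
    (G₁.normAdj - G₂.normAdj) u w ^ 2 ≤ 4⁻¹ := by
  have h₂ : ¬G₂.Adj u w := fun h₂ => ((adj_iff_of_symmDiff_eq_singleton h huw u w).1 h₂).2 rfl
  have hdu := degree_eq_add_one_of_symmDiff_eq_singleton h huw
  have hdw := degree_eq_add_one_of_symmDiff_eq_singleton (h.trans (by rw [Sym2.eq_swap])) huw.symm
  have hu : (2 : ℝ) ≤ G₁.degree u := by have := hdeg u; exact_mod_cast (by omega : 2 ≤ G₁.degree u)
  have hw : (2 : ℝ) ≤ G₁.degree w := by have := hdeg w; exact_mod_cast (by omega : 2 ≤ G₁.degree w)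
  rw [Matrix.sub_apply, normAdj_apply, normAdj_apply, if_pos huw, if_neg h₂, sub_zero, inv_pow,
    mul_pow, Real.sq_sqrt (by positivity), Real.sq_sqrt (by positivity)]
  gcongr
  nlinarith

lemma sq_normAdj_sub_apply_le_of_symmDiff_eq_singleton_of_adj (hdeg : ∀ v, 0 < G₂.degree v)
    {j : V} (hj : G₁.Adj u j) (hjw : j ≠ w) :
    (G₁.normAdj - G₂.normAdj) u j ^ 2 ≤ (G₂.degree u : ℝ)⁻¹ - ((G₂.degree u : ℝ) + 1)⁻¹ := by
  have h₂ : G₂.Adj u j :=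
    (adj_iff_of_symmDiff_eq_singleton h huw u j).2 ⟨hj, by rwa [ne_eq, Sym2.congr_right]⟩
  have hdu : (G₁.degree u : ℝ) = G₂.degree u + 1 := by
    exact_mod_cast degree_eq_add_one_of_symmDiff_eq_singleton h huw
  have hdj := degree_eq_of_symmDiff_eq_singleton h huw hj.ne.symm hjw
  have hu : (0 : ℝ) < G₂.degree u := by exact_mod_cast hdeg u
  have hj1 : (1 : ℝ) ≤ G₂.degree j := by exact_mod_cast hdeg j
  rw [Matrix.sub_apply, normAdj_apply, normAdj_apply, if_pos hj, if_pos h₂, ← hdj, hdu, mul_inv,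
    mul_inv, ← sub_mul, mul_pow, inv_pow (√_), Real.sq_sqrt (by positivity), sub_sq_comm]
  calc ((√(G₂.degree u : ℝ))⁻¹ - (√(G₂.degree u + 1 : ℝ))⁻¹) ^ 2 * (G₂.degree j : ℝ)⁻¹
      ≤ ((√(G₂.degree u : ℝ))⁻¹ - (√(G₂.degree u + 1 : ℝ))⁻¹) ^ 2 * 1 := by
        gcongr; exact inv_le_one_of_one_le₀ hj1
    _ ≤ (G₂.degree u : ℝ)⁻¹ - ((G₂.degree u : ℝ) + 1)⁻¹ := by
        rw [mul_one]; exact sq_inv_sqrt_sub_inv_sqrt_le hu (by linarith)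

lemma sq_normAdj_sub_apply_le_of_symmDiff_eq_singleton (hdeg : ∀ v, 0 < G₂.degree v) (j : V) :
    (G₁.normAdj - G₂.normAdj) u j ^ 2 ≤
      (if G₂.Adj u j then (G₂.degree u : ℝ)⁻¹ - ((G₂.degree u : ℝ) + 1)⁻¹ else 0) +
        if j = w then 4⁻¹ else 0 := by
  have hadj := adj_iff_of_symmDiff_eq_singleton h huw u j
  by_cases hj : G₁.Adj u j
  · by_cases hjw : j = w
    · subst hjw
      rw [if_neg fun h₂ => (hadj.1 h₂).2 rfl, if_pos rfl, zero_add]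
      exact sq_normAdj_sub_apply_edge_le_of_symmDiff_eq_singleton h huw hdeg
    · rw [if_pos (hadj.2 ⟨hj, by rwa [ne_eq, Sym2.congr_right]⟩), if_neg hjw, add_zero]
      exact sq_normAdj_sub_apply_le_of_symmDiff_eq_singleton_of_adj h huw hdeg hj hjw
  · have h₂ : ¬G₂.Adj u j := fun h₂ => hj (hadj.1 h₂).1
    rw [Matrix.sub_apply, normAdj_apply, normAdj_apply, if_neg hj, if_neg h₂, if_neg h₂, sub_zero,
      zero_add]
    split_ifs <;> norm_num

lemma sum_sq_normAdj_sub_row_le_of_symmDiff_eq_singleton (hdeg : ∀ v, 0 < G₂.degree v) :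
    ∑ j, (G₁.normAdj - G₂.normAdj) u j ^ 2 ≤ 3 / 4 := by
  have hd : (1 : ℝ) ≤ G₂.degree u := by exact_mod_cast hdeg u
  calc ∑ j, (G₁.normAdj - G₂.normAdj) u j ^ 2
      ≤ ∑ j, ((if G₂.Adj u j then (G₂.degree u : ℝ)⁻¹ - ((G₂.degree u : ℝ) + 1)⁻¹ else 0) +
          if j = w then 4⁻¹ else 0) :=
        sum_le_sum fun j _ => sq_normAdj_sub_apply_le_of_symmDiff_eq_singleton h huw hdeg j
    _ = G₂.degree u * ((G₂.degree u : ℝ)⁻¹ - ((G₂.degree u : ℝ) + 1)⁻¹) + 4⁻¹ := by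
        rw [sum_add_distrib, sum_ite_adj, sum_ite_eq' univ w, if_pos (mem_univ w)]
    _ ≤ 3 / 4 := by
        field_simp
        nlinarith

lemma sum_sq_normAdj_sub_le_three_of_symmDiff_eq_singleton (hdeg : ∀ v, 0 < G₂.degree v) :
    ∑ i, ∑ j, (G₁.normAdj - G₂.normAdj) i j ^ 2 ≤ 3 := by
  have hS : symmDiffSupport G₁ G₂ = {u, w} := by
    rw [symmDiffSupport, h, singleton_biUnion, Sym2.toFinset_mk_eq]
  have h' : symmDiff G₁.edgeFinset G₂.edgeFinset = {s(w, u)} := h.trans (by rw [Sym2.eq_swap])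
  calc ∑ i, ∑ j, (G₁.normAdj - G₂.normAdj) i j ^ 2
      ≤ 2 * ∑ i ∈ {u, w}, ∑ j, (G₁.normAdj - G₂.normAdj) i j ^ 2 :=
        hS ▸ (isSymm_normAdj_sub G₁ G₂).sum_sq_le_two_mul_of_apply_eq_zero _ fun _ hi _ hj =>
          normAdj_sub_apply_eq_zero G₁ G₂ hi hj
    _ ≤ 3 := by
        rw [sum_pair huw.ne]
        linarith [sum_sq_normAdj_sub_row_le_of_symmDiff_eq_singleton h huw hdeg,
          sum_sq_normAdj_sub_row_le_of_symmDiff_eq_singleton h' huw.symm hdeg]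

lemma three_le_card_of_symmDiff_eq_singleton (hdeg : ∀ v, 0 < G₂.degree v) :
    3 ≤ Fintype.card V := by
  have := degree_eq_add_one_of_symmDiff_eq_singleton h huw
  have := G₁.degree_lt_card_verts u
  have := hdeg u
  omega

end SingleEdge

lemma sum_sq_normAdj_sub_le_three_of_card_symmDiff_eq_one (hdeg₁ : ∀ v, 0 < G₁.degree v)
    (hdeg₂ : ∀ v, 0 < G₂.degree v) (h : #(symmDiff G₁.edgeFinset G₂.edgeFinset) = 1) :
    ∑ i, ∑ j, (G₁.normAdj - G₂.normAdj) i j ^ 2 ≤ 3 ∧ 3 ≤ Fintype.card V := by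
  obtain ⟨e, he⟩ := card_eq_one.1 h
  induction e using Sym2.ind with | _ u w => ?_
  rcases mem_symmDiff.1 (he ▸ mem_singleton_self _) with ⟨h₁, -⟩ | ⟨h₂, -⟩
  · have huw : G₁.Adj u w := by simpa using h₁
    exact ⟨sum_sq_normAdj_sub_le_three_of_symmDiff_eq_singleton he huw hdeg₂,
      three_le_card_of_symmDiff_eq_singleton he huw hdeg₂⟩
  · have huw : G₂.Adj u w := by simpa using h₂
    rw [symmDiff_comm] at he
    refine ⟨?_, three_le_card_of_symmDiff_eq_singleton he huw hdeg₁⟩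
    simpa only [← neg_sub G₁.normAdj, Matrix.neg_apply, neg_sq] using
      sum_sq_normAdj_sub_le_three_of_symmDiff_eq_singleton he huw hdeg₁

lemma rank_mul_sum_sq_normAdj_sub_le_mul_sq :
    ((G₁.normAdj - G₂.normAdj).rank : ℝ) * ∑ i, ∑ j, (G₁.normAdj - G₂.normAdj) i j ^ 2 ≤
      32 * #(symmDiff G₁.edgeFinset G₂.edgeFinset) ^ 2 := by
  have hrank : ((G₁.normAdj - G₂.normAdj).rank : ℝ) ≤ 2 * #(symmDiffSupport G₁ G₂) := by
    exact_mod_cast rank_normAdj_sub_le G₁ G₂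
  have hS : (#(symmDiffSupport G₁ G₂) : ℝ) ≤ 2 * #(symmDiff G₁.edgeFinset G₂.edgeFinset) := by
    exact_mod_cast card_symmDiffSupport_le G₁ G₂
  calc ((G₁.normAdj - G₂.normAdj).rank : ℝ) * ∑ i, ∑ j, (G₁.normAdj - G₂.normAdj) i j ^ 2
      ≤ (2 * #(symmDiffSupport G₁ G₂)) * (4 * #(symmDiffSupport G₁ G₂)) := by
        gcongr
        exact sum_sq_normAdj_sub_le G₁ G₂
    _ ≤ 32 * #(symmDiff G₁.edgeFinset G₂.edgeFinset) ^ 2 := by nlinarith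

lemma rank_mul_sum_sq_normAdj_sub_le_card_sq :
    ((G₁.normAdj - G₂.normAdj).rank : ℝ) * ∑ i, ∑ j, (G₁.normAdj - G₂.normAdj) i j ^ 2 ≤
      4 * Fintype.card V ^ 2 := by
  have hrank : ((G₁.normAdj - G₂.normAdj).rank : ℝ) ≤ Fintype.card V := by
    exact_mod_cast rank_le_card_height _
  have hS : (#(symmDiffSupport G₁ G₂) : ℝ) ≤ Fintype.card V := by exact_mod_cast card_le_univ _
  calc ((G₁.normAdj - G₂.normAdj).rank : ℝ) * ∑ i, ∑ j, (G₁.normAdj - G₂.normAdj) i j ^ 2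
      ≤ Fintype.card V * (4 * #(symmDiffSupport G₁ G₂)) := by
        gcongr
        exact sum_sq_normAdj_sub_le G₁ G₂
    _ ≤ 4 * Fintype.card V ^ 2 := by nlinarith

theorem rank_mul_sum_sq_normAdj_sub_le [Nonempty V] (hdeg₁ : ∀ v, 0 < G₁.degree v)
    (hdeg₂ : ∀ v, 0 < G₂.degree v) :
    ((G₁.normAdj - G₂.normAdj).rank : ℝ) * ∑ i, ∑ j, (G₁.normAdj - G₂.normAdj) i j ^ 2 ≤
      8 * #(symmDiff G₁.edgeFinset G₂.edgeFinset) ^ 2 * (Fintype.card V - 1) := by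
  have hk32 := rank_mul_sum_sq_normAdj_sub_le_mul_sq G₁ G₂
  have hN4 := rank_mul_sum_sq_normAdj_sub_le_card_sq G₁ G₂
  set k := #(symmDiff G₁.edgeFinset G₂.edgeFinset)
  set N := Fintype.card V
  have hN : 2 ≤ N := by
    obtain ⟨v⟩ := ‹Nonempty V›
    have := G₁.degree_lt_card_verts v
    have := hdeg₁ v
    omega
  have hN' : (2 : ℝ) ≤ N := by exact_mod_cast hN
  obtain hk | hk | hk : k = 0 ∨ k = 1 ∨ 2 ≤ k := by omega
  · simpa [hk] using hk32
  · obtain ⟨hF, hN3⟩ := sum_sq_normAdj_sub_le_three_of_card_symmDiff_eq_one G₁ G₂ hdeg₁ hdeg₂ hk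
    have hrank : ((G₁.normAdj - G₂.normAdj).rank : ℝ) ≤ 4 := by
      exact_mod_cast (rank_normAdj_sub_le G₁ G₂).trans (by linarith [card_symmDiffSupport_le G₁ G₂])
    have hN3' : (3 : ℝ) ≤ N := by exact_mod_cast hN3
    calc _ ≤ (4 : ℝ) * 3 := mul_le_mul hrank hF (by positivity) (by norm_num)
      _ ≤ 8 * k ^ 2 * (N - 1) := by rw [hk]; push_cast; linarith
  · have hk' : (2 : ℝ) ≤ k := by exact_mod_cast hk
    by_cases hN5 : 5 ≤ N
    · have hN5' : (5 : ℝ) ≤ N := by exact_mod_cast hN5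
      exact hk32.trans (by nlinarith)
    · have hN4' : (N : ℝ) ≤ 4 := by exact_mod_cast (by omega : N ≤ 4)
      calc _ ≤ 4 * (N : ℝ) ^ 2 := hN4
        _ ≤ 8 * 2 ^ 2 * (N - 1) := by nlinarith
        _ ≤ 8 * k ^ 2 * (N - 1) := mul_le_mul_of_nonneg_right (by gcongr) (by linarith)

end SimpleGraph

lemma normLap_eq_one_sub_normAdj {n : ℕ} (G : SimpleGraph (Fin n)) [DecidableRel G.Adj] :
    normLap G = 1 - G.normAdj := rfl

/-- If two finite simple graphs without isolated vertices on the same `n` vertices differ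
by at most `C` edges, then their symmetric normalized Laplacians satisfy
`‖L̂₁ - L̂₂‖_{S¹} ≤ 2C√2·√(n-1)`. -/
theorem schattenOne_normLap_sub_le {n : ℕ}
    (G₁ G₂ : SimpleGraph (Fin n)) [DecidableRel G₁.Adj] [DecidableRel G₂.Adj]
    (hdeg₁ : ∀ v, 0 < G₁.degree v) (hdeg₂ : ∀ v, 0 < G₂.degree v)
    (C : ℕ) (hedges : (symmDiff G₁.edgeFinset G₂.edgeFinset).card ≤ C)
    (hH : (normLap G₁ - normLap G₂).IsHermitian) :
    ∑ i, |hH.eigenvalues i| ≤ 2 * C * Real.sqrt 2 * Real.sqrt ((n : ℝ) - 1) := by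
  rcases Nat.eq_zero_or_pos n with rfl | hn
  · simp only [univ_eq_empty, sum_empty]
    positivity
  have : Nonempty (Fin n) := ⟨⟨0, hn⟩⟩
  have hM : normLap G₁ - normLap G₂ = G₂.normAdj - G₁.normAdj := by
    rw [normLap_eq_one_sub_normAdj, normLap_eq_one_sub_normAdj, sub_sub_sub_cancel_left]
  have hbound := G₂.rank_mul_sum_sq_normAdj_sub_le G₁ hdeg₂ hdeg₁
  rw [symmDiff_comm, Fintype.card_fin, ← hM] at hbound
  have hn' : (0 : ℝ) ≤ n - 1 := by rw [sub_nonneg]; exact_mod_cast hn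
  have hsq : (∑ i, |hH.eigenvalues i|) ^ 2 ≤ (2 * C * Real.sqrt 2 * Real.sqrt ((n : ℝ) - 1)) ^ 2 :=
    calc (∑ i, |hH.eigenvalues i|) ^ 2
        ≤ (normLap G₁ - normLap G₂).rank * ∑ i, ∑ j, (normLap G₁ - normLap G₂) i j ^ 2 :=
          hH.sq_sum_abs_eigenvalues_le
      _ ≤ 8 * #(symmDiff G₁.edgeFinset G₂.edgeFinset) ^ 2 * (n - 1) := hbound
      _ ≤ 8 * C ^ 2 * (n - 1) := by gcongr
      _ = (2 * C * Real.sqrt 2 * Real.sqrt ((n : ℝ) - 1)) ^ 2 := by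
          rw [mul_pow, mul_pow, mul_pow, Real.sq_sqrt zero_le_two, Real.sq_sqrt hn']
          ring
  exact (pow_le_pow_iff_left₀ (by positivity) (by positivity) two_ne_zero).1 hsq
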